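/- arXiv:2203.01889 — 2 statements merged into one kernel-verified Lean document; each statement's English description precedes it below -/
import Mathlib

section
/- Let x and y be nonzero vectors in ℝ^n all of whose coordinates are nonnegative. Then the normalized vectors satisfy ‖x/‖x‖₂ − y/‖y‖₂‖₂ ≤ √2 · ‖x − y‖₂ / ‖x‖₂. -/
/-!
Write `a = ‖x‖`, `b = ‖y‖`, `t = ⟪x, y⟫`. The squared left side is `2 - 2t/(ab)` and the squared
right side is `2(a² - 2t + b²)/a²`; their difference is `2(b³ - t(2b - a))/(a²b)`. Nonnegative
coordinates give `t ≥ 0`, and with Cauchy–Schwarz `t ≤ ab` this forces `t(2b - a) ≤ b³`: for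
`a ≤ 2b` it is `ab(2b - a) ≤ b³`, i.e. `b(a - b)² ≥ 0`.
-/

open RealInnerProductSpace

theorem inner_nonneg_of_forall_nonneg {ι : Type*} [Fintype ι] {x y : EuclideanSpace ℝ ι}
    (hx : ∀ i, 0 ≤ x i) (hy : ∀ i, 0 ≤ y i) : 0 ≤ ⟪x, y⟫ :=
  Finset.sum_nonneg fun i _ => mul_nonneg (hy i) (hx i)

theorem mul_two_mul_sub_le_pow_three {a b t : ℝ} (hb : 0 ≤ b) (ht : 0 ≤ t) (htab : t ≤ a * b) :
    t * (2 * b - a) ≤ b ^ 3 := by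
  rcases le_total a (2 * b) with h | h
  · nlinarith [mul_le_mul_of_nonneg_right htab (sub_nonneg.2 h), mul_nonneg hb (sq_nonneg (a - b))]
  · nlinarith [mul_nonneg ht (sub_nonneg.2 h), pow_nonneg hb 3]

variable {E : Type*} [NormedAddCommGroup E] [InnerProductSpace ℝ E]

theorem norm_inv_smul_sub_inv_smul_sq {x y : E} (hx : x ≠ 0) (hy : y ≠ 0) :
    ‖‖x‖⁻¹ • x - ‖y‖⁻¹ • y‖ ^ 2 = 2 - 2 * ⟪x, y⟫ / (‖x‖ * ‖y‖) := by
  have ha : ‖x‖ ≠ 0 := norm_ne_zero_iff.2 hx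
  have hb : ‖y‖ ≠ 0 := norm_ne_zero_iff.2 hy
  rw [norm_sub_sq_real, real_inner_smul_left, real_inner_smul_right, norm_smul, norm_smul]
  simp only [norm_inv, norm_norm]
  field_simp
  ring

theorem norm_inv_smul_sub_inv_smul_le {x y : E} (hx : x ≠ 0) (hxy : 0 ≤ ⟪x, y⟫) :
    ‖‖x‖⁻¹ • x - ‖y‖⁻¹ • y‖ ≤ √2 * ‖x - y‖ / ‖x‖ := by
  rcases eq_or_ne y 0 with rfl | hy
  · -- `‖0‖⁻¹ • 0 = 0`, so the left side is `1`
    simp [norm_smul, hx]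
  have ha := norm_pos_iff.2 hx
  have hb := norm_pos_iff.2 hy
  have key := mul_two_mul_sub_le_pow_three hb.le hxy (real_inner_le_norm x y)
  rw [← pow_le_pow_iff_left₀ (norm_nonneg _) (by positivity) two_ne_zero,
    norm_inv_smul_sub_inv_smul_sq hx hy, div_pow, mul_pow, Real.sq_sqrt zero_le_two,
    norm_sub_sq_real]
  set t := ⟪x, y⟫
  rw [← sub_nonneg]
  have hdiff : 2 * (‖x‖ ^ 2 - 2 * t + ‖y‖ ^ 2) / ‖x‖ ^ 2 - (2 - 2 * t / (‖x‖ * ‖y‖))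
      = 2 * (‖y‖ ^ 3 - t * (2 * ‖y‖ - ‖x‖)) / (‖x‖ ^ 2 * ‖y‖) := by
    field_simp
    ring
  rw [hdiff]
  exact div_nonneg (mul_nonneg zero_le_two (sub_nonneg.2 key)) (by positivity)

theorem normalized_dist_le_of_nonneg_coords_general
    (n : ℕ) (x y : EuclideanSpace ℝ (Fin n))
    (hx : x ≠ 0)
    (hx0 : ∀ i, 0 ≤ x i) (hy0 : ∀ i, 0 ≤ y i) :
    ‖‖x‖⁻¹ • x - ‖y‖⁻¹ • y‖ ≤ Real.sqrt 2 * ‖x - y‖ / ‖x‖ :=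
  norm_inv_smul_sub_inv_smul_le hx (inner_nonneg_of_forall_nonneg hx0 hy0)

/-- If `x, y` are nonzero vectors in `ℝ^n` with nonnegative coordinates, then
`‖x/‖x‖₂ - y/‖y‖₂‖₂ ≤ √2 ‖x - y‖₂ / ‖x‖₂`. -/
theorem normalized_dist_le_of_nonneg_coords
    (n : ℕ) (x y : EuclideanSpace ℝ (Fin n))
    (hx : x ≠ 0) (hy : y ≠ 0)
    (hx0 : ∀ i, 0 ≤ x i) (hy0 : ∀ i, 0 ≤ y i) :
    ‖‖x‖⁻¹ • x - ‖y‖⁻¹ • y‖ ≤ Real.sqrt 2 * ‖x - y‖ / ‖x‖ :=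
  normalized_dist_le_of_nonneg_coords_general n x y hx hx0 hy0
end

section
/- Under the hypotheses of the quantum policy iteration error bound, if in addition ‖q̂^{π_t} − q^{π_t}‖_∞ ≤ ε holds for every iteration t, then limsup_{t→∞} ‖ |Q*⟩ − |Q^{π_t}⟩ ‖_ρ ≤ 2√2 · γ Γ² · ε. -/
/-!
Normalisation costs only a factor `√2`: if `⟪u, v⟫ ≥ 0` and `0 < ‖v‖ ≤ ‖u‖`, then
`‖u/‖u‖ - v/‖v‖‖ ≤ √2 ‖u - v‖ / ‖u‖`. For `u = Q*` and `v = Q^{π_t}` (positive, `Q^{π_t} ≤ Q*`)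
this bounds the `ρ`-error by `√2 ‖Q* - Q^{π_t}‖_∞ / ‖Q*‖₂`.

Multiplying the estimate for `q̂^{π_t}` by `‖Q^{π_t}‖₂ ≤ ‖Q*‖₂` shows that `π_{t+1}` is
`2ε‖Q*‖₂`-greedy for `Q^{π_t}`. As in approximate policy iteration, a `d`-greedy step loses at
most `γdΓ` against the current value, so the sup-norm gap to `Q*` obeys
`gₜ₊₁ ≤ γ gₜ + γdΓ`, whence `limsup gₜ ≤ γdΓ²` and the bound follows with `d = 2ε‖Q*‖₂`.
-/

open Filter Topology Function

noncomputable def l2norm {ι : Type*} [Fintype ι] (v : ι → ℝ) : ℝ :=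
  Real.sqrt (∑ i, v i ^ 2)

theorem norm_inv_norm_smul_sub_le {E : Type*} [NormedAddCommGroup E] [InnerProductSpace ℝ E]
    {x y : E} (hxy : 0 ≤ inner ℝ x y) (hy : 0 < ‖y‖) (hyx : ‖y‖ ≤ ‖x‖) :
    ‖‖x‖⁻¹ • x - ‖y‖⁻¹ • y‖ ≤ √2 * ‖x - y‖ / ‖x‖ := by
  set a := ‖x‖
  set b := ‖y‖
  set c := inner ℝ x y
  have ha : 0 < a := hy.trans_le hyx
  have hc : c ≤ a * b := real_inner_le_norm x y
  have hdiff : ‖x - y‖ ^ 2 = a ^ 2 - 2 * c + b ^ 2 := norm_sub_sq_real x y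
  have hnormalized : ‖a⁻¹ • x - b⁻¹ • y‖ ^ 2 = 2 - 2 * c / (a * b) := by
    rw [norm_sub_sq_real, real_inner_smul_left, real_inner_smul_right, norm_smul, norm_smul,
      norm_inv, norm_inv, Real.norm_of_nonneg ha.le, Real.norm_of_nonneg hy.le]
    field_simp
    ring
  -- `2 - 2c/(ab) ≤ 2(a² - 2c + b²)/a²` rearranges to `c (2b - a) ≤ b³`
  have key : c * (2 * b - a) ≤ b ^ 3 := by
    rcases le_total a (2 * b) with h | h
    · nlinarith [mul_nonneg (sub_nonneg.2 hc) (sub_nonneg.2 h),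
        mul_nonneg hy.le (sq_nonneg (a - b))]
    · nlinarith [mul_nonneg hxy (sub_nonneg.2 h), pow_pos hy 3]
  refine le_of_pow_le_pow_left₀ two_ne_zero (by positivity) ?_
  have hab : 2 - 2 * c / (a * b) = 2 * (a * b - c) / (a * b) := by field_simp
  rw [hnormalized, hab, div_pow, mul_pow, Real.sq_sqrt zero_le_two, hdiff,
    div_le_div_iff₀ (by positivity) (by positivity)]
  nlinarith [mul_le_mul_of_nonneg_left key (by positivity : (0:ℝ) ≤ 2 * a)]

section L2Norm

variable {ι : Type*} [Fintype ι]

theorem l2norm_eq_norm_toLp (v : ι → ℝ) : l2norm v = ‖WithLp.toLp 2 v‖ := by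
  simp [l2norm, EuclideanSpace.norm_eq]

theorem l2norm_pos [Nonempty ι] {v : ι → ℝ} (hv : ∀ i, 0 < v i) : 0 < l2norm v :=
  Real.sqrt_pos.2 (Finset.sum_pos (fun i _ => pow_pos (hv i) 2) Finset.univ_nonempty)

theorem l2norm_mono {u v : ι → ℝ} (hu : 0 ≤ u) (huv : u ≤ v) : l2norm u ≤ l2norm v :=
  Real.sqrt_le_sqrt (Finset.sum_le_sum fun i _ => pow_le_pow_left₀ (hu i) (huv i) 2)

theorem l2norm_le_sqrt_card_mul_norm (v : ι → ℝ) : l2norm v ≤ √(Fintype.card ι) * ‖v‖ := by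
  have hsum : ∑ i, v i ^ 2 ≤ Fintype.card ι * ‖v‖ ^ 2 := by
    rw [← nsmul_eq_mul, ← Finset.card_univ, ← Finset.sum_const]
    refine Finset.sum_le_sum fun i _ => ?_
    simpa [Real.norm_eq_abs, sq_abs] using pow_le_pow_left₀ (norm_nonneg _) (norm_le_pi_norm v i) 2
  calc l2norm v ≤ √(Fintype.card ι * ‖v‖ ^ 2) := Real.sqrt_le_sqrt hsum
    _ = √(Fintype.card ι) * ‖v‖ := by
      rw [Real.sqrt_mul (Nat.cast_nonneg _), Real.sqrt_sq (norm_nonneg v)]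

theorem l2norm_normalize_sub_div_sqrt_card_le [Nonempty ι] {u v : ι → ℝ} (hv : 0 ≤ v)
    (hvu : v ≤ u) (hv' : 0 < l2norm v) :
    l2norm ((l2norm u)⁻¹ • u - (l2norm v)⁻¹ • v) / √(Fintype.card ι) ≤
      √2 * ‖u - v‖ / l2norm u := by
  have hinner : 0 ≤ inner ℝ (WithLp.toLp 2 u : EuclideanSpace ℝ ι) (WithLp.toLp 2 v) := by
    rw [PiLp.inner_apply]
    exact Finset.sum_nonneg fun i _ => by simpa using mul_nonneg (hv i) ((hv i).trans (hvu i))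
  have hnorm := norm_inv_norm_smul_sub_le hinner
    (by rwa [← l2norm_eq_norm_toLp])
    (by simpa only [← l2norm_eq_norm_toLp] using l2norm_mono hv hvu)
  simp only [← l2norm_eq_norm_toLp, ← WithLp.toLp_smul, ← WithLp.toLp_sub] at hnorm
  have hcard : 0 < √(Fintype.card ι : ℝ) := by simp [Fintype.card_pos]
  rw [div_le_iff₀ hcard]
  calc l2norm ((l2norm u)⁻¹ • u - (l2norm v)⁻¹ • v)
      ≤ √2 * l2norm (u - v) / l2norm u := hnorm
    _ ≤ √2 * (√(Fintype.card ι) * ‖u - v‖) / l2norm u := by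
      gcongr
      exacts [Real.sqrt_nonneg _, l2norm_le_sqrt_card_mul_norm (u - v)]
    _ = √2 * ‖u - v‖ / l2norm u * √(Fintype.card ι) := by ring

end L2Norm

theorem sum_mul_le_sum_mul_add {ι : Type*} [Fintype ι] {q w w' : ι → ℝ} {c : ℝ}
    (hq0 : ∀ i, 0 ≤ q i) (hq1 : ∑ i, q i = 1) (h : ∀ i, w i ≤ w' i + c) :
    ∑ i, q i * w i ≤ ∑ i, q i * w' i + c := by
  calc ∑ i, q i * w i ≤ ∑ i, q i * (w' i + c) :=
        Finset.sum_le_sum fun i _ => mul_le_mul_of_nonneg_left (h i) (hq0 i)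
    _ = ∑ i, q i * w' i + c := by
        simp only [mul_add, Finset.sum_add_distrib, ← Finset.sum_mul, hq1, one_mul]

theorem le_pow_mul_sub_add_of_le_mul_add {u : ℕ → ℝ} {c k : ℝ} (hc0 : 0 ≤ c) (hc1 : c ≠ 1)
    (h : ∀ t, u (t + 1) ≤ c * u t + k) (t : ℕ) :
    u t ≤ c ^ t * (u 0 - k / (1 - c)) + k / (1 - c) := by
  induction t with
  | zero => simp
  | succ t ih =>
    have hc : 1 - c ≠ 0 := sub_ne_zero.2 hc1.symm
    calc u (t + 1) ≤ c * (c ^ t * (u 0 - k / (1 - c)) + k / (1 - c)) + k := (h t).trans (by gcongr)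
      _ = c ^ (t + 1) * (u 0 - k / (1 - c)) + k / (1 - c) := by field_simp; ring

theorem limsup_le_of_le_mul_of_le_mul_add {f u : ℕ → ℝ} {C c k : ℝ} (hf : 0 ≤ f)
    (hfu : ∀ t, f t ≤ C * u t) (hC : 0 ≤ C) (hc0 : 0 ≤ c) (hc1 : c < 1)
    (hu : ∀ t, u (t + 1) ≤ c * u t + k) : limsup f atTop ≤ C * (k / (1 - c)) := by
  have hb : Tendsto (fun t => C * (c ^ t * (u 0 - k / (1 - c)) + k / (1 - c))) atTop
      (𝓝 (C * (0 * (u 0 - k / (1 - c)) + k / (1 - c)))) :=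
    (((tendsto_pow_atTop_nhds_zero_of_lt_one hc0 hc1).mul_const _).add_const _).const_mul _
  have hfb : ∀ t, f t ≤ C * (c ^ t * (u 0 - k / (1 - c)) + k / (1 - c)) := fun t =>
    (hfu t).trans (by gcongr; exact le_pow_mul_sub_add_of_le_mul_add hc0 hc1.ne hu t)
  calc limsup f atTop ≤ C * (0 * (u 0 - k / (1 - c)) + k / (1 - c)) :=
        (limsup_le_limsup (Eventually.of_forall hfb) (isCoboundedUnder_le_of_le atTop hf)
          hb.isBoundedUnder_le).trans_eq hb.limsup_eq
    _ = C * (k / (1 - c)) := by rw [zero_mul, zero_add]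

theorem le_add_of_norm_sub_inv_smul_le {ι : Type*} [Fintype ι] {Q q : ι → ℝ} {N ε : ℝ}
    (hN : 0 < N) (h : ‖q - N⁻¹ • Q‖ ≤ ε) {i j : ι} (hij : q i ≤ q j) :
    Q i ≤ Q j + 2 * (N * ε) := by
  have hi : |q i - N⁻¹ * Q i| ≤ ε := by simpa using (norm_le_pi_norm _ i).trans h
  have hj : |q j - N⁻¹ * Q j| ≤ ε := by simpa using (norm_le_pi_norm _ j).trans h
  have hscaled : N⁻¹ * Q i ≤ N⁻¹ * Q j + 2 * ε := by linarith [abs_le.1 hi, abs_le.1 hj]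
  calc Q i = N * (N⁻¹ * Q i) := by field_simp
    _ ≤ N * (N⁻¹ * Q j + 2 * ε) := by gcongr
    _ = Q j + 2 * (N * ε) := by field_simp

theorem le_of_forall_eq_iSup {ι α : Type*} [Finite ι] {F : ι → α → ℝ} {G : α → ℝ}
    (hG : ∀ x, G x = ⨆ i, F i x) (i : ι) (x : α) : F i x ≤ G x :=
  (hG x).symm ▸ le_ciSup (Set.finite_range fun i => F i x).bddAbove i

section Bellman

variable {S A : Type*} [Fintype S] {p : S → A → S → ℝ} {r : S × A → ℝ} {γ : ℝ}

variable (p r γ) in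
noncomputable def bellman (π : S → A) (Q : S × A → ℝ) : S × A → ℝ :=
  fun x => r x + γ * ∑ s', p x.1 x.2 s' * Q (s', π s')

theorem bellman_le_bellman_add (hp0 : ∀ s a s', 0 ≤ p s a s') (hp1 : ∀ s a, ∑ s', p s a s' = 1)
    (hγ : 0 ≤ γ) {π π' : S → A} {Q Q' : S × A → ℝ} {c : ℝ}
    (h : ∀ s, Q (s, π s) ≤ Q' (s, π' s) + c) (x : S × A) :
    bellman p r γ π Q x ≤ bellman p r γ π' Q' x + γ * c := by
  have := mul_le_mul_of_nonneg_left (sum_mul_le_sum_mul_add (hp0 x.1 x.2) (hp1 x.1 x.2) h) hγ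
  simp only [bellman]
  linarith

theorem pos_of_isFixedPt_bellman (hp0 : ∀ s a s', 0 ≤ p s a s')
    (hp1 : ∀ s a, ∑ s', p s a s' = 1) (hγ0 : 0 ≤ γ) (hγ1 : γ < 1) (hr : ∀ x, 0 < r x) [Finite A]
    {π : S → A} {Q : S × A → ℝ} (hQ : IsFixedPt (bellman p r γ π) Q) (x : S × A) : 0 < Q x := by
  have : Nonempty (S × A) := ⟨x⟩
  obtain ⟨x₀, hx₀⟩ := Finite.exists_min Q
  have h := bellman_le_bellman_add hp0 hp1 hγ0 (r := r) (Q := 0) (π := π) (c := -Q x₀)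
    (fun s => by simpa using hx₀ (s, π s)) x₀
  rw [congrFun hQ x₀] at h
  simp only [bellman, Pi.zero_apply, mul_zero, Finset.sum_const_zero, add_zero] at h
  have hQx₀ : 0 < Q x₀ := by nlinarith [hr x₀]
  exact hQx₀.trans_le (hx₀ x)

theorem le_add_of_isFixedPt_of_almost_greedy (hp0 : ∀ s a s', 0 ≤ p s a s')
    (hp1 : ∀ s a, ∑ s', p s a s' = 1) (hγ0 : 0 ≤ γ) (hγ1 : γ < 1) [Finite A] {π π' : S → A}
    {Q Q' : S × A → ℝ} (hQ : IsFixedPt (bellman p r γ π) Q) (hQ' : IsFixedPt (bellman p r γ π') Q')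
    {d : ℝ} (hd : ∀ s, Q (s, π s) ≤ Q (s, π' s) + d) (x : S × A) :
    Q x ≤ Q' x + γ * d / (1 - γ) := by
  have : Nonempty (S × A) := ⟨x⟩
  obtain ⟨x₀, hx₀⟩ := Finite.exists_max fun y => Q y - Q' y
  have hstep : ∀ y, Q y ≤ Q' y + γ * (Q x₀ - Q' x₀) + γ * d := fun y =>
    calc Q y = bellman p r γ π Q y := (congrFun hQ y).symm
      _ ≤ bellman p r γ π' Q y + γ * d := bellman_le_bellman_add hp0 hp1 hγ0 hd y
      _ ≤ bellman p r γ π' Q' y + γ * (Q x₀ - Q' x₀) + γ * d := by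
        gcongr
        exact bellman_le_bellman_add hp0 hp1 hγ0 (fun s => by linarith [hx₀ (s, π' s)]) y
      _ = Q' y + γ * (Q x₀ - Q' x₀) + γ * d := by rw [congrFun hQ' y]
  have hmax : Q x₀ - Q' x₀ ≤ γ * d / (1 - γ) := by
    rw [le_div_iff₀ (sub_pos.2 hγ1)]
    linarith [hstep x₀]
  linarith [hx₀ x]

theorem le_add_of_isFixedPt_of_almost_greedy_of_le_add (hp0 : ∀ s a s', 0 ≤ p s a s')
    (hp1 : ∀ s a, ∑ s', p s a s' = 1) (hγ0 : 0 ≤ γ) (hγ1 : γ < 1) [Finite A] {σ π π' : S → A}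
    {Qσ Q Q' : S × A → ℝ} (hQσ : IsFixedPt (bellman p r γ σ) Qσ)
    (hQ : IsFixedPt (bellman p r γ π) Q) (hQ' : IsFixedPt (bellman p r γ π') Q')
    {d δ : ℝ} (hd : ∀ s b, Q (s, b) ≤ Q (s, π' s) + d) (hδ : ∀ y, Qσ y ≤ Q y + δ) (x : S × A) :
    Qσ x ≤ Q' x + γ * δ + γ * d / (1 - γ) := by
  have hγ : 1 - γ ≠ 0 := (sub_pos.2 hγ1).ne'
  calc Qσ x = bellman p r γ σ Qσ x := (congrFun hQσ x).symm
    _ ≤ bellman p r γ π' Q x + γ * (δ + d) :=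
      bellman_le_bellman_add hp0 hp1 hγ0 (fun s => by linarith [hδ (s, σ s), hd s (σ s)]) x
    _ ≤ bellman p r γ π' Q' x + γ * (γ * d / (1 - γ)) + γ * (δ + d) := by
      gcongr
      exact bellman_le_bellman_add hp0 hp1 hγ0 (fun s => le_add_of_isFixedPt_of_almost_greedy
        hp0 hp1 hγ0 hγ1 hQ hQ' (fun s => hd s (π s)) (s, π' s)) x
    _ = Q' x + γ * δ + γ * d / (1 - γ) := by rw [congrFun hQ' x]; field_simp; ring

theorem norm_iSup_sub_le_of_almost_greedy [Fintype A] (hp0 : ∀ s a s', 0 ≤ p s a s')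
    (hp1 : ∀ s a, ∑ s', p s a s' = 1) (hγ0 : 0 ≤ γ) (hγ1 : γ < 1)
    {Qf : (S → A) → S × A → ℝ} (hQf : ∀ π, IsFixedPt (bellman p r γ π) (Qf π))
    {Qstar : S × A → ℝ} (hQstar : ∀ x, Qstar x = ⨆ π, Qf π x) {π π' : S → A} {d : ℝ}
    (hd0 : 0 ≤ d) (hd : ∀ s b, Qf π (s, b) ≤ Qf π (s, π' s) + d) :
    ‖Qstar - Qf π'‖ ≤ γ * ‖Qstar - Qf π‖ + γ * d / (1 - γ) := by
  have hle := le_of_forall_eq_iSup hQstar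
  refine (pi_norm_le_iff_of_nonneg (by have := sub_pos.2 hγ1; positivity)).2 fun x => ?_
  have : Nonempty (S → A) := ⟨fun _ => x.2⟩
  rw [Pi.sub_apply, Real.norm_of_nonneg (sub_nonneg.2 (hle π' x)), sub_le_iff_le_add', hQstar,
    ← add_assoc]
  refine ciSup_le fun σ => le_add_of_isFixedPt_of_almost_greedy_of_le_add hp0 hp1 hγ0 hγ1
    (hQf σ) (hQf π) (hQf π') hd (fun y => (hle σ y).trans ?_) x
  have := (le_abs_self _).trans (norm_le_pi_norm (Qstar - Qf π) y)
  rw [Pi.sub_apply] at this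
  linarith

end Bellman

theorem quantum_policy_iteration_eps_bound_general
    {S A : Type*} [Fintype S] [Fintype A] [Nonempty S] [Nonempty A]
    (p : S → A → S → ℝ) (hp0 : ∀ s a s', 0 ≤ p s a s')
    (hp1 : ∀ s a, ∑ s', p s a s' = 1)
    (r : S × A → ℝ) (hr0 : ∀ x, 0 < r x)
    (γ : ℝ) (hγ0 : 0 < γ) (hγ1 : γ < 1)
    (Qf : (S → A) → S × A → ℝ)
    (hQf : ∀ (π : S → A) (s : S) (a : A),
      Qf π (s, a) = r (s, a) + γ * ∑ s', p s a s' * Qf π (s', π s'))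
    (Qstar : S × A → ℝ) (hQstar : ∀ x, Qstar x = ⨆ π : S → A, Qf π x)
    (πs : ℕ → S → A) (qhat : ℕ → S × A → ℝ)
    (hgreedy : ∀ (t : ℕ) (s : S) (a : A), qhat t (s, a) ≤ qhat t (s, πs (t + 1) s))
    (ε : ℝ)
    (heps : ∀ t : ℕ, ‖qhat t - (l2norm (Qf (πs t)))⁻¹ • Qf (πs t)‖ ≤ ε) :
    Filter.limsup
        (fun t : ℕ =>
          l2norm ((l2norm Qstar)⁻¹ • Qstar - (l2norm (Qf (πs t)))⁻¹ • Qf (πs t)) /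
            Real.sqrt (Fintype.card S * Fintype.card A))
        Filter.atTop ≤
      2 * Real.sqrt 2 * γ * (1 / (1 - γ)) ^ 2 * ε := by
  have hQfix : ∀ π, IsFixedPt (bellman p r γ π) (Qf π) :=
    fun π => funext fun x => (hQf π x.1 x.2).symm
  have hpos : ∀ π x, 0 < Qf π x :=
    fun π => pos_of_isFixedPt_bellman hp0 hp1 hγ0.le hγ1 hr0 (hQfix π)
  have hle := le_of_forall_eq_iSup hQstar
  set M := l2norm Qstar
  have hM : 0 < M := l2norm_pos fun x => (hpos (πs 0) x).trans_le (hle _ x)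
  have hε : 0 ≤ ε := (norm_nonneg _).trans (heps 0)
  have hgreedyQ : ∀ t s b, Qf (πs t) (s, b) ≤ Qf (πs t) (s, πs (t + 1) s) + 2 * (M * ε) :=
    fun t s b => (le_add_of_norm_sub_inv_smul_le (l2norm_pos (hpos _)) (heps t)
      (hgreedy t s b)).trans (by gcongr; exact l2norm_mono (fun x => (hpos _ x).le) (hle _))
  refine (limsup_le_of_le_mul_of_le_mul_add (u := fun t => ‖Qstar - Qf (πs t)‖)
    (fun t => div_nonneg (Real.sqrt_nonneg _) (Real.sqrt_nonneg _)) (fun t => ?_)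
    (by positivity : 0 ≤ √2 / M) hγ0.le hγ1 fun t => norm_iSup_sub_le_of_almost_greedy hp0 hp1
      hγ0.le hγ1 hQfix hQstar (by positivity) (hgreedyQ t)).trans_eq ?_
  · rw [← Nat.cast_mul, ← Fintype.card_prod, ← mul_div_right_comm]
    exact l2norm_normalize_sub_div_sqrt_card_le (fun x => (hpos _ x).le) (hle _)
      (l2norm_pos (hpos _))
  · field_simp [(sub_pos.2 hγ1).ne']

/-- Under the hypotheses of the quantum policy iteration error bound, if moreover
`‖q̂^{π_t} - q^{π_t}‖_∞ ≤ ε` for every iteration `t`, then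
`limsup ‖|Q*⟩ - |Q^{π_t}⟩‖_ρ ≤ 2√2 γΓ² ε`. -/
theorem quantum_policy_iteration_eps_bound
    {S A : Type*} [Fintype S] [Fintype A] [Nonempty S] [Nonempty A]
    (p : S → A → S → ℝ) (hp0 : ∀ s a s', 0 ≤ p s a s')
    (hp1 : ∀ s a, ∑ s', p s a s' = 1)
    (r : S × A → ℝ) (hr0 : ∀ x, 0 < r x) (hr1 : ∀ x, r x ≤ 1)
    (γ : ℝ) (hγ0 : 0 < γ) (hγ1 : γ < 1)
    (Qf : (S → A) → S × A → ℝ)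
    (hQf : ∀ (π : S → A) (s : S) (a : A),
      Qf π (s, a) = r (s, a) + γ * ∑ s', p s a s' * Qf π (s', π s'))
    (Qstar : S × A → ℝ) (hQstar : ∀ x, Qstar x = ⨆ π : S → A, Qf π x)
    (πs : ℕ → S → A) (qhat : ℕ → S × A → ℝ)
    (hunit : ∀ t, l2norm (qhat t) = 1) (hnonneg : ∀ t x, 0 ≤ qhat t x)
    (hgreedy : ∀ (t : ℕ) (s : S) (a : A), qhat t (s, a) ≤ qhat t (s, πs (t + 1) s))
    (ε : ℝ)
    (heps : ∀ t : ℕ, ‖qhat t - (l2norm (Qf (πs t)))⁻¹ • Qf (πs t)‖ ≤ ε) :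
    Filter.limsup
        (fun t : ℕ =>
          l2norm ((l2norm Qstar)⁻¹ • Qstar - (l2norm (Qf (πs t)))⁻¹ • Qf (πs t)) /
            Real.sqrt (Fintype.card S * Fintype.card A))
        Filter.atTop ≤
      2 * Real.sqrt 2 * γ * (1 / (1 - γ)) ^ 2 * ε :=
  quantum_policy_iteration_eps_bound_general p hp0 hp1 r hr0 γ hγ0 hγ1 Qf hQf Qstar hQstar πs qhat
    hgreedy ε heps
end
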